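/- Let R be a Noetherian ring, I an ideal, M a finitely generated R-module, and f ∈ I^s \\ I^{s+1} superficial for M with respect to I. Then for n sufficiently large, the sequence 0 → I^{n-s}M/I^{n-s+1}M → I^nM/I^{n+1}M → I^n(M/fM)/I^{n+1}(M/fM) → 0 is exact, where the first map is induced by multiplication by f and the second by the quotient M → M/fM. -/

import Mathlib

open Submodule

section GradedInfra

variable {R : Type*} [CommRing R] (I : Ideal R) (M : Type*) [AddCommGroup M] [Module R M]

/-- The `n`-th graded piece `I^n M / I^{n+1} M` of the associated graded module `G_I(M)`. -/
noncomputable abbrev gradedPiece (n : ℕ) : Type _ :=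
  ↥(I ^ n • (⊤ : Submodule R M)) ⧸
    (Submodule.comap (I ^ n • (⊤ : Submodule R M)).subtype (I ^ (n + 1) • (⊤ : Submodule R M)))

/-- `f` is superficial of degree `s` for `M` with respect to `I`: for all large `n`,
multiplication by the initial form of `f` is injective `G_I(M)_n → G_I(M)_{n+s}`. -/
def IsSuperficial (f : R) (s : ℕ) : Prop :=
  ∃ n₀ : ℕ, ∀ n ≥ n₀, ∀ x ∈ (I ^ n • (⊤ : Submodule R M)),
    f • x ∈ (I ^ (n + s + 1) • (⊤ : Submodule R M)) → x ∈ I ^ (n + 1) • (⊤ : Submodule R M)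

variable {I M} in
theorem smul_mem_pow_smul {f : R} {s : ℕ} (hf : f ∈ I ^ s) {n : ℕ} {x : M}
    (hx : x ∈ I ^ n • (⊤ : Submodule R M)) : f • x ∈ I ^ (n + s) • (⊤ : Submodule R M) := by
  have h1 : f • x ∈ I ^ s • (I ^ n • (⊤ : Submodule R M)) := Submodule.smul_mem_smul hf hx
  rwa [← mul_smul, ← pow_add, add_comm s n] at h1

/-- Multiplication by the initial form of `f ∈ I^s`, as a map of graded pieces
`G_I(M)_n → G_I(M)_{n+s}`. -/
noncomputable def gradedMulMap {f : R} {s : ℕ} (hf : f ∈ I ^ s) (n : ℕ) :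
    gradedPiece I M n →ₗ[R] gradedPiece I M (n + s) :=
  Submodule.mapQ _ _
    ((LinearMap.lsmul R M f).restrict (p := I ^ n • ⊤) (q := I ^ (n + s) • ⊤)
      (fun _ hx => smul_mem_pow_smul hf hx))
    (fun _ hx => by
      have h2 := smul_mem_pow_smul (n := n + 1) hf hx
      rwa [show n + 1 + s = n + s + 1 by omega] at h2)

variable {I M} in
theorem mkQ_mem_pow_smul (N : Submodule R M) {n : ℕ} {x : M}
    (hx : x ∈ I ^ n • (⊤ : Submodule R M)) :
    N.mkQ x ∈ I ^ n • (⊤ : Submodule R (M ⧸ N)) := by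
  have h : Submodule.map N.mkQ (I ^ n • (⊤ : Submodule R M))
      = I ^ n • (⊤ : Submodule R (M ⧸ N)) := by
    rw [Submodule.map_smul'', Submodule.map_top, Submodule.range_mkQ]
  exact h ▸ Submodule.mem_map_of_mem hx

/-- The map `I^n M → G_I(M/N)_n` induced by the quotient map `M → M/N`. -/
noncomputable def toGradedQuot (N : Submodule R M) (n : ℕ) :
    ↥(I ^ n • (⊤ : Submodule R M)) →ₗ[R] gradedPiece I (M ⧸ N) n :=
  (Submodule.comap (I ^ n • (⊤ : Submodule R (M ⧸ N))).subtype
      (I ^ (n + 1) • (⊤ : Submodule R (M ⧸ N)))).mkQ.comp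
    (N.mkQ.restrict (p := I ^ n • ⊤) (q := I ^ n • ⊤) (fun _ hx => mkQ_mem_pow_smul N hx))

/-- The map of graded pieces `G_I(M)_n → G_I(M/N)_n` induced by the quotient `M → M/N`. -/
noncomputable def gradedQuotMap (N : Submodule R M) (n : ℕ) :
    gradedPiece I M n →ₗ[R] gradedPiece I (M ⧸ N) n :=
  Submodule.liftQ _ (toGradedQuot I M N n)
    (fun x hx => by
      have h : N.mkQ x.1 ∈ I ^ (n + 1) • (⊤ : Submodule R (M ⧸ N)) := mkQ_mem_pow_smul N hx
      exact (Submodule.Quotient.mk_eq_zero _).mpr h)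

end GradedInfra
section Aux

variable {R : Type*} [CommRing R] {M : Type*} [AddCommGroup M] [Module R M]

theorem pow_smul_top_mono (I : Ideal R) {a b : ℕ} (h : a ≤ b) :
    I ^ b • (⊤ : Submodule R M) ≤ I ^ a • (⊤ : Submodule R M) :=
  Submodule.smul_mono_left (Ideal.pow_le_pow_right h)

/-- Climbing lemma: iterate the superficiality condition. -/
theorem superficial_climb {I : Ideal R} {f : R} {s n₀ : ℕ}
    (h : ∀ n ≥ n₀, ∀ x ∈ (I ^ n • (⊤ : Submodule R M)),
      f • x ∈ (I ^ (n + s + 1) • (⊤ : Submodule R M)) → x ∈ I ^ (n + 1) • (⊤ : Submodule R M)) :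
    ∀ j : ℕ, ∀ k ≥ n₀, ∀ x ∈ I ^ k • (⊤ : Submodule R M),
      f • x ∈ I ^ (k + s + j) • (⊤ : Submodule R M) → x ∈ I ^ (k + j) • (⊤ : Submodule R M) := by
  intro j
  induction j with
  | zero => intro k _ x hx _; simpa using hx
  | succ j ih =>
    intro k hk x hx hfx
    have h1 : f • x ∈ I ^ (k + s + 1) • (⊤ : Submodule R M) :=
      pow_smul_top_mono I (by omega) hfx
    have h2 : x ∈ I ^ (k + 1) • (⊤ : Submodule R M) := h k hk x hx h1
    have h3 : f • x ∈ I ^ ((k + 1) + s + j) • (⊤ : Submodule R M) := by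
      have : (k + 1) + s + j = k + s + (j + 1) := by omega
      rwa [this]
    have h4 := ih (k + 1) (by omega) x h2 h3
    have : (k + 1) + j = k + (j + 1) := by omega
    rwa [this] at h4

theorem span_singleton_smul_top_eq (f : R) :
    Ideal.span {f} • (⊤ : Submodule R M) = Submodule.map (LinearMap.lsmul R M f) ⊤ := by
  apply le_antisymm
  · refine Submodule.smul_le.2 fun r hr m _ => ?_
    obtain ⟨a, rfl⟩ := Ideal.mem_span_singleton'.mp hr
    exact ⟨a • m, Submodule.mem_top, by
      simp [mul_smul, smul_comm a f m]⟩
  · rintro _ ⟨m, -, rfl⟩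
    exact Submodule.smul_mem_smul (Ideal.mem_span_singleton_self f) Submodule.mem_top

end Aux

section ArtinRees

universe u v

/-- A universe-polymorphic consequence of the Artin–Rees lemma. -/
theorem artin_rees_poly {R : Type u} {M : Type v} [CommRing R] [AddCommGroup M] [Module R M]
    [IsNoetherianRing R] [Module.Finite R M] (I : Ideal R) (N : Submodule R M) :
    ∃ k : ℕ, ∀ n ≥ k, I ^ n • (⊤ : Submodule R M) ⊓ N ≤ I ^ (n - k) • N := by
  classical
  let σ : ULift.{v} R ≃+* R := ULift.ringEquiv
  haveI : IsNoetherianRing (ULift.{v} R) := isNoetherianRing_of_ringEquiv R σ.symm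
  haveI : Module.Finite (ULift.{v} R) (ULift.{u} M) := by
    obtain ⟨S, hS⟩ := Module.Finite.fg_top (R := R) (M := ULift.{u} M)
    refine ⟨⟨S, ?_⟩⟩
    rw [eq_top_iff]
    intro x _
    have hx : x ∈ Submodule.span R (S : Set (ULift.{u} M)) := hS ▸ Submodule.mem_top
    refine Submodule.span_induction
      (p := fun y _ => y ∈ Submodule.span (ULift.{v} R) (S : Set (ULift.{u} M)))
      (fun y hy => Submodule.subset_span hy) (Submodule.zero_mem _)
      (fun y z _ _ hy hz => Submodule.add_mem _ hy hz)
      (fun r y _ hy => ?_) hx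
    show r • y ∈ Submodule.span (ULift.{v} R) (S : Set (ULift.{u} M))
    have h : r • y = (ULift.up r : ULift.{v} R) • y := rfl
    rw [h]; exact Submodule.smul_mem _ _ hy
  -- the lift of a submodule of `M` to a submodule of `ULift M` over `ULift R`
  let L : Submodule R M → Submodule (ULift.{v} R) (ULift.{u} M) := fun p =>
    { carrier := {x | x.down ∈ p}
      add_mem' := fun hx hy => p.add_mem hx hy
      zero_mem' := p.zero_mem
      smul_mem' := fun a x hx => p.smul_mem a.down hx }
  have hL_smul : ∀ (J : Ideal R) (p : Submodule R M),
      L (J • p) = (J.comap σ) • L p := by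
    intro J p
    apply le_antisymm
    · intro x hx
      have key : ∀ m ∈ J • p, (ULift.up m : ULift.{u} M) ∈ (J.comap σ) • L p := by
        intro m hm
        refine Submodule.smul_induction_on hm (fun a ha y hy => ?_) (fun y z hy hz => ?_)
        · have h : (ULift.up (a • y) : ULift.{u} M) = (ULift.up a : ULift.{v} R) • ULift.up y :=
            rfl
          rw [h]
          exact Submodule.smul_mem_smul (show ULift.up a ∈ J.comap σ from ha)
            (show (ULift.up y : ULift.{u} M) ∈ L p from hy)
        · have h : (ULift.up (y + z) : ULift.{u} M) = ULift.up y + ULift.up z := rfl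
          rw [h]; exact Submodule.add_mem _ hy hz
      exact key x.down hx
    · refine Submodule.smul_le.2 fun a ha x hx => ?_
      show a.down • x.down ∈ J • p
      exact Submodule.smul_mem_smul ha hx
  have hL_pow : ∀ (n : ℕ), (I.comap σ) ^ n = (I ^ n).comap σ := by
    intro n
    rw [← Ideal.map_symm, ← Ideal.map_symm, Ideal.map_pow]
  obtain ⟨k, hk⟩ := Ideal.exists_pow_inf_eq_pow_smul (I.comap σ) (L N)
  refine ⟨k, fun n hn z hz => ?_⟩
  have hz1 : (ULift.up z : ULift.{u} M) ∈
      (I.comap σ) ^ n • (⊤ : Submodule (ULift.{v} R) (ULift.{u} M)) ⊓ L N := by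
    constructor
    · have h : (I.comap σ) ^ n • (⊤ : Submodule (ULift.{v} R) (ULift.{u} M))
          = L (I ^ n • ⊤) := by
        rw [hL_smul, hL_pow]
        refine congrArg _ (le_antisymm le_top fun x _ => ?_)
        exact Submodule.mem_top
      rw [h]
      exact hz.1
    · exact hz.2
  rw [hk n hn] at hz1
  have hz2 : (ULift.up z : ULift.{u} M) ∈ (I.comap σ) ^ (n - k) • L N :=
    Submodule.smul_mono le_rfl inf_le_right hz1
  rw [hL_pow, ← hL_smul] at hz2
  exact hz2

end ArtinRees

section Aux2

variable {R : Type*} [CommRing R] {M : Type*} [AddCommGroup M] [Module R M]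

/-- Key lemma (Artin–Rees plus superficiality): for large `n`,
`fM ∩ I^{n+s} M ⊆ f · (I^n M)`. -/
theorem key_inf_le [IsNoetherianRing R] [Module.Finite R M] {I : Ideal R} {f : R} {s : ℕ}
    (hsup : IsSuperficial I M f s) :
    ∃ n₁ : ℕ, ∀ n ≥ n₁, (Ideal.span {f} • (⊤ : Submodule R M)) ⊓ (I ^ (n + s) • ⊤)
      ≤ Submodule.map (LinearMap.lsmul R M f) (I ^ n • ⊤) := by
  obtain ⟨n₀, h0⟩ := hsup
  obtain ⟨c, hc⟩ := artin_rees_poly I (Ideal.span {f} • (⊤ : Submodule R M))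
  obtain ⟨c', hcc', hsc'⟩ : ∃ c', c ≤ c' ∧ s ≤ c' := ⟨max c s, le_max_left c s, le_max_right c s⟩
  refine ⟨n₀ + c', fun n hn z hz => ?_⟩
  obtain ⟨j, rfl⟩ := Nat.exists_eq_add_of_le hsc'
  obtain ⟨d, rfl⟩ := Nat.exists_eq_add_of_le hn
  have hz' : z ∈ I ^ (n₀ + (s + j) + d + s - c) • (Ideal.span {f} • (⊤ : Submodule R M)) :=
    hc (n₀ + (s + j) + d + s) (by omega) ⟨hz.2, hz.1⟩
  have hz'' : z ∈ I ^ (n₀ + s + d) • (Ideal.span {f} • (⊤ : Submodule R M)) :=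
    Submodule.smul_mono_left (Ideal.pow_le_pow_right (by omega)) hz'
  rw [span_singleton_smul_top_eq, ← Submodule.map_smul''] at hz''
  obtain ⟨m, hm, rfl⟩ := hz''
  have h5 : (LinearMap.lsmul R M f) m = f • m := rfl
  have hzz : f • m ∈ I ^ (n₀ + (s + j) + d + s) • (⊤ : Submodule R M) := by
    rw [← h5]; exact hz.2
  have h6 : f • m ∈ I ^ (n₀ + s + d + s + j) • (⊤ : Submodule R M) :=
    pow_smul_top_mono I (by omega) hzz
  have h7 := superficial_climb h0 j (n₀ + s + d) (by omega) m hm h6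
  exact ⟨m, pow_smul_top_mono I (by omega) h7, rfl⟩

end Aux2

/-- If `f ∈ I^s \ I^{s+1}` is superficial for `M` w.r.t. `I`, then for all large `n`
the sequence `0 → I^nM/I^{n+1}M → I^{n+s}M/I^{n+s+1}M → I^{n+s}(M/fM)/I^{n+s+1}(M/fM) → 0`
is exact, the first map induced by multiplication by `f` and the second by `M → M/fM`. -/
theorem stmt_15 {R M : Type*} [CommRing R] [IsNoetherianRing R] [AddCommGroup M] [Module R M]
    [Module.Finite R M] (I : Ideal R) (f : R) (s : ℕ) (hf : f ∈ I ^ s) (hf' : f ∉ I ^ (s + 1))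
    (hsup : IsSuperficial I M f s) :
    ∃ n₀ : ℕ, ∀ n ≥ n₀,
      Function.Injective (gradedMulMap I M hf n) ∧
      Function.Exact (gradedMulMap I M hf n)
        (gradedQuotMap I M (Ideal.span {f} • (⊤ : Submodule R M)) (n + s)) ∧
      Function.Surjective
        (gradedQuotMap I M (Ideal.span {f} • (⊤ : Submodule R M)) (n + s)) := by
  classical
  obtain ⟨n₀, h0⟩ := hsup
  obtain ⟨n₁, h1⟩ := @key_inf_le R _ M _ _ _ _ I f s ⟨n₀, h0⟩
  set N : Submodule R M := Ideal.span {f} • ⊤ with hN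
  refine ⟨max n₀ n₁, fun n hn => ?_⟩
  have hn₀ : n ≥ n₀ := le_trans (le_max_left _ _) hn
  have hn₁ : n ≥ n₁ := le_trans (le_max_right _ _) hn
  -- quotient-module graded pieces are images
  have hmap : ∀ k : ℕ, Submodule.map N.mkQ (I ^ k • (⊤ : Submodule R M))
      = I ^ k • (⊤ : Submodule R (M ⧸ N)) := fun k => by
    rw [Submodule.map_smul'', Submodule.map_top, Submodule.range_mkQ]
  -- Injectivity
  have hinj : Function.Injective (gradedMulMap I M hf n) := by
    rw [← LinearMap.ker_eq_bot, eq_bot_iff]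
    rintro x hx
    obtain ⟨⟨m, hm⟩, rfl⟩ := Submodule.Quotient.mk_surjective _ x
    erw [LinearMap.mem_ker, gradedMulMap, Submodule.mapQ_apply,
      Submodule.Quotient.mk_eq_zero, Submodule.mem_comap] at hx
    have hfm : f • m ∈ I ^ (n + s + 1) • (⊤ : Submodule R M) := hx
    have hm1 : m ∈ I ^ (n + 1) • (⊤ : Submodule R M) := h0 n hn₀ m hm hfm
    simpa [Submodule.mem_bot, Submodule.Quotient.mk_eq_zero, Submodule.mem_comap] using hm1
  refine ⟨hinj, ?_, ?_⟩
  -- Exactness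
  · intro y
    obtain ⟨⟨x, hx⟩, rfl⟩ := Submodule.Quotient.mk_surjective _ y
    constructor
    · intro hy
      erw [gradedQuotMap, Submodule.liftQ_apply, toGradedQuot, LinearMap.comp_apply,
        Submodule.mkQ_apply, Submodule.Quotient.mk_eq_zero, Submodule.mem_comap] at hy
      have hy' : N.mkQ x ∈ I ^ (n + s + 1) • (⊤ : Submodule R (M ⧸ N)) := hy
      rw [← hmap (n + s + 1)] at hy'
      obtain ⟨x', hx', hxx'⟩ := hy'
      have hdiff : x - x' ∈ N := by
        rw [← Submodule.Quotient.mk_eq_zero (p := N)]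
        have : N.mkQ (x - x') = 0 := by
          rw [map_sub, hxx', sub_self]
        simpa using this
      have hdiff2 : x - x' ∈ I ^ (n + s) • (⊤ : Submodule R M) :=
        Submodule.sub_mem _ hx (pow_smul_top_mono I (by omega) hx')
      obtain ⟨m, hm, hfm⟩ := h1 n hn₁ ⟨hdiff, hdiff2⟩
      refine ⟨Submodule.Quotient.mk ⟨m, hm⟩, ?_⟩
      erw [gradedMulMap, Submodule.mapQ_apply, Submodule.Quotient.eq, Submodule.mem_comap]
      have : f • m - x ∈ I ^ (n + s + 1) • (⊤ : Submodule R M) := by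
        have hfm' : f • m = x - x' := hfm
        rw [hfm', show x - x' - x = -x' by abel]
        exact Submodule.neg_mem _ hx'
      exact this
    · rintro ⟨z, hz⟩
      obtain ⟨⟨m, hm⟩, rfl⟩ := Submodule.Quotient.mk_surjective _ z
      rw [← hz]
      refine (Submodule.Quotient.mk_eq_zero _).mpr ?_
      have hfm : N.mkQ (f • m) = 0 := by
        rw [Submodule.mkQ_apply, Submodule.Quotient.mk_eq_zero]
        exact Submodule.smul_mem_smul (Ideal.mem_span_singleton_self f) Submodule.mem_top
      show N.mkQ (f • m) ∈ I ^ (n + s + 1) • (⊤ : Submodule R (M ⧸ N))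
      rw [hfm]
      exact Submodule.zero_mem _
  -- Surjectivity
  · intro y
    obtain ⟨⟨q, hq⟩, rfl⟩ := Submodule.Quotient.mk_surjective _ y
    rw [← hmap (n + s)] at hq
    obtain ⟨m, hm, hmq⟩ := hq
    refine ⟨Submodule.Quotient.mk ⟨m, hm⟩, ?_⟩
    erw [gradedQuotMap, Submodule.liftQ_apply, toGradedQuot, LinearMap.comp_apply,
      Submodule.mkQ_apply]
    congr 1
    exact Subtype.ext hmq
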